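/- arXiv:2109.14962 — 6 statements merged into one kernel-verified Lean document; each statement's English description precedes it below -/
import Mathlib

section
/- (Switching) Let C ⊆ Q_q^d be an MDS(t,d,q) code, let A_1,…,A_d ⊆ Q_q, and suppose C_1 = C ∩ (A_1×⋯×A_d) is an MDS subcode of C in the subcube A_1×⋯×A_d (an MDS code with code distance t+1 in A_1×⋯×A_d). Let C_2 be any MDS code with code distance t+1 in the same subcube A_1×⋯×A_d. Then C' = (C \ C_1) ∪ C_2 is an MDS(t,d,q) code. -/
/-- `C ⊆ Q_q^d` is an MDS code with code distance `t+1`. -/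
def IsMDS {α : Type*} (d t : ℕ) (C : Set (Fin d → α)) : Prop :=
  ∀ S : Finset (Fin d), S.card = d - t →
    ∀ g : Fin d → α, ∃! x : Fin d → α, x ∈ C ∧ ∀ i ∈ S, x i = g i

/-- `T` is an MDS code with code distance `t+1` in the subcube `A 0 × ⋯ × A (d-1)`. -/
def IsMDSIn {α : Type*} (d t : ℕ) (A : Fin d → Set α) (T : Set (Fin d → α)) : Prop :=
  (∀ x ∈ T, ∀ i, x i ∈ A i) ∧
    ∀ S : Finset (Fin d), S.card = d - t →
      ∀ g : Fin d → α, (∀ i ∈ S, g i ∈ A i) →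
        ∃! x : Fin d → α, x ∈ T ∧ ∀ i ∈ S, x i = g i

/-- Switching: if `C₁ = C ∩ (A_1×⋯×A_d)` is an MDS subcode of the MDS(t,d,q)
code `C` and `C₂` is any MDS code with code distance `t+1` in the same subcube,
then `(C \ C₁) ∪ C₂` is an MDS(t,d,q) code. -/
theorem switching (d t q : ℕ) (C : Set (Fin d → Fin q)) (hC : IsMDS d t C)
    (A : Fin d → Set (Fin q)) (hcard : ∀ i j, (A i).ncard = (A j).ncard)
    (C₁ : Set (Fin d → Fin q)) (hC₁ : C₁ = C ∩ {x | ∀ i, x i ∈ A i})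
    (hC₁MDS : IsMDSIn d t A C₁)
    (C₂ : Set (Fin d → Fin q)) (hC₂ : IsMDSIn d t A C₂) :
    IsMDS d t ((C \ C₁) ∪ C₂) := by
  intro S hS g
  obtain ⟨x₀, ⟨hx₀C, hx₀g⟩, hx₀u⟩ := hC S hS g
  by_cases hg : ∀ i ∈ S, g i ∈ A i
  · -- x₀ ∈ C₁
    obtain ⟨y, ⟨hyC₁, hyg⟩, hyu⟩ := hC₁MDS.2 S hS g hg
    have hyC : y ∈ C := (hC₁ ▸ hyC₁).1
    have hyx₀ : y = x₀ := hx₀u y ⟨hyC, hyg⟩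
    have hx₀C₁ : x₀ ∈ C₁ := hyx₀ ▸ hyC₁
    obtain ⟨z, ⟨hzC₂, hzg⟩, hzu⟩ := hC₂.2 S hS g hg
    refine ⟨z, ⟨Or.inr hzC₂, hzg⟩, ?_⟩
    rintro w ⟨(⟨hwC, hwC₁⟩ | hwC₂), hwg⟩
    · exact absurd (hx₀u w ⟨hwC, hwg⟩ ▸ hx₀C₁) hwC₁
    · exact hzu w ⟨hwC₂, hwg⟩
  · push_neg at hg
    obtain ⟨i, hiS, hgi⟩ := hg
    have hx₀C₁ : x₀ ∉ C₁ := by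
      intro h
      exact hgi (hx₀g i hiS ▸ (hC₁ ▸ h).2 i)
    refine ⟨x₀, ⟨Or.inl ⟨hx₀C, hx₀C₁⟩, hx₀g⟩, ?_⟩
    rintro w ⟨(⟨hwC, _⟩ | hwC₂), hwg⟩
    · exact hx₀u w ⟨hwC, hwg⟩
    · exact absurd (hwg i hiS ▸ hC₂.1 w hwC₂ i) hgi
end

section
/- Let C ⊆ Q_q^d be an MDS(t,d,q) code, let C_1 be an MDS subcode of C in a subcube A_1×⋯×A_d, and let u ∈ A_1×⋯×A_d. Then there exists an MDS code C_2 with code distance t+1 in the subcube A_1×⋯×A_d such that C' = (C \ C_1) ∪ C_2 is an MDS(t,d,q) code and u ∈ C'. -/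
/-- If `C₁` is an MDS subcode of an MDS(t,d,q) code `C` in the subcube
`A_1×⋯×A_d` and `u ∈ A_1×⋯×A_d`, then there is an MDS code `C₂` with the same
code distance in the same subcube such that `C' = (C \ C₁) ∪ C₂` is an
MDS(t,d,q) code containing `u`. -/
theorem switching_through_point (d t q : ℕ)
    (C : Set (Fin d → Fin q)) (hC : IsMDS d t C)
    (A : Fin d → Set (Fin q)) (hcard : ∀ i j, (A i).ncard = (A j).ncard)
    (C₁ : Set (Fin d → Fin q)) (hC₁ : C₁ = C ∩ {x | ∀ i, x i ∈ A i})
    (hC₁MDS : IsMDSIn d t A C₁)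
    (u : Fin d → Fin q) (hu : ∀ i, u i ∈ A i) :
    ∃ C₂ : Set (Fin d → Fin q), IsMDSIn d t A C₂ ∧
      IsMDS d t ((C \ C₁) ∪ C₂) ∧ u ∈ (C \ C₁) ∪ C₂ := by
  classical
  -- get some x₀ ∈ C₁
  obtain ⟨S₀, -, hS₀⟩ := Finset.exists_subset_card_eq
    (s := (Finset.univ : Finset (Fin d))) (n := d - t) (by simp [Nat.sub_le])
  obtain ⟨x₀, ⟨hx₀C₁, -⟩, -⟩ := hC₁MDS.2 S₀ hS₀ u (fun i _ => hu i)
  -- involution swapping x₀ and u coordinatewise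
  set F : (Fin d → Fin q) → (Fin d → Fin q) :=
    fun y i => Equiv.swap (x₀ i) (u i) (y i) with hFdef
  have hFF : ∀ y, F (F y) = y := by
    intro y; funext i; simp [F, Equiv.swap_apply_self]
  have hswapA : ∀ i z, z ∈ A i → Equiv.swap (x₀ i) (u i) z ∈ A i := by
    intro i z hz
    by_cases h1 : z = x₀ i
    · simpa [h1] using hu i
    by_cases h2 : z = u i
    · simpa [h2] using hC₁MDS.1 x₀ hx₀C₁ i
    · simpa [Equiv.swap_apply_of_ne_of_ne h1 h2] using hz
  -- key fact: any codeword of C agreeing with an A-valued assignment lies in C₁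
  have key : ∀ S : Finset (Fin d), S.card = d - t → ∀ g : Fin d → Fin q,
      (∀ i ∈ S, g i ∈ A i) → ∀ y ∈ C, (∀ i ∈ S, y i = g i) → y ∈ C₁ := by
    intro S hS g hg y hy hyg
    obtain ⟨x, ⟨hxC₁, hxg⟩, -⟩ := hC₁MDS.2 S hS g hg
    have hxC : x ∈ C := (hC₁ ▸ hxC₁).1
    obtain ⟨z, -, hzu⟩ := hC S hS g
    have h1 := hzu y ⟨hy, hyg⟩
    have h2 := hzu x ⟨hxC, hxg⟩
    rw [h1, ← h2]; exact hxC₁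
  have hC₂MDS : IsMDSIn d t A (F ⁻¹' C₁) := by
    constructor
    · intro y hy i
      have h1 : F y i ∈ A i := hC₁MDS.1 (F y) hy i
      have h2 : y i = Equiv.swap (x₀ i) (u i) (F y i) := by
        have := congrFun (hFF y) i
        exact this.symm
      rw [h2]; exact hswapA i _ h1
    · intro S hS g hg
      have hg' : ∀ i ∈ S, F g i ∈ A i := fun i hi => hswapA i _ (hg i hi)
      obtain ⟨x, ⟨hxC₁, hxg⟩, hxu⟩ := hC₁MDS.2 S hS (F g) hg'
      refine ⟨F x, ⟨by simp [Set.mem_preimage, hFF x, hxC₁], ?_⟩, ?_⟩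
      · intro i hi
        have : F x i = Equiv.swap (x₀ i) (u i) (x i) := rfl
        rw [this, hxg i hi]
        exact congrFun (hFF g) i
      · rintro y ⟨hyC₂, hyg⟩
        have : F y = x := by
          refine hxu (F y) ⟨hyC₂, fun i hi => ?_⟩
          show Equiv.swap (x₀ i) (u i) (y i) = Equiv.swap (x₀ i) (u i) (g i)
          rw [hyg i hi]
        calc y = F (F y) := (hFF y).symm
          _ = F x := by rw [this]
  refine ⟨F ⁻¹' C₁, hC₂MDS, ?_, Or.inr ?_⟩
  · intro S hS g
    by_cases hgA : ∀ i ∈ S, g i ∈ A i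
    · obtain ⟨x, ⟨hxC₂, hxg⟩, hxu⟩ := hC₂MDS.2 S hS g hgA
      refine ⟨x, ⟨Or.inr hxC₂, hxg⟩, ?_⟩
      rintro y ⟨hy | hyC₂, hyg⟩
      · exact absurd (key S hS g hgA y hy.1 hyg) hy.2
      · exact hxu y ⟨hyC₂, hyg⟩
    · push_neg at hgA
      obtain ⟨i₀, hi₀S, hi₀⟩ := hgA
      obtain ⟨x, ⟨hxC, hxg⟩, hxu⟩ := hC S hS g
      have hxnC₁ : x ∉ C₁ := by
        intro hx
        exact hi₀ (hxg i₀ hi₀S ▸ hC₁MDS.1 x hx i₀)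
      refine ⟨x, ⟨Or.inl ⟨hxC, hxnC₁⟩, hxg⟩, ?_⟩
      rintro y ⟨hy | hyC₂, hyg⟩
      · exact hxu y ⟨hy.1, hyg⟩
      · exact absurd (hyg i₀ hi₀S ▸ hC₂MDS.1 y hyC₂ i₀) hi₀
  · show F u ∈ C₁
    have : F u = x₀ := by
      funext i; simp [F, Equiv.swap_apply_right]
    rw [this]; exact hx₀C₁
end

section
/- (Generalized McNeish) Let M ⊆ Q_{q_1}^d be an MDS(t,d,q_1) code and, for each x ∈ M, let U[x] ⊆ Q_{q_2}^d be an MDS(t,d,q_2) code. Then the set ⋃_{x ∈ M} {((x_1,y_1),…,(x_d,y_d)) : (y_1,…,y_d) ∈ U[x]}, regarded as a subset of (Q_{q_1}×Q_{q_2})^d, is an MDS(t,d,q_1q_2) code over the alphabet Q_{q_1}×Q_{q_2}. -/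
/-- Generalized McNeish theorem: if `M` is an MDS(t,d,q₁) code and `U[x]` is an
MDS(t,d,q₂) code for each `x ∈ M`, then `⋃_{x ∈ M} x × U[x]`, viewed over the
alphabet `Q_{q₁} × Q_{q₂}` of size `q₁q₂`, is an MDS(t,d,q₁q₂) code. -/
theorem generalized_mcneish (d t q₁ q₂ : ℕ)
    (M : Set (Fin d → Fin q₁)) (hM : IsMDS d t M)
    (U : (Fin d → Fin q₁) → Set (Fin d → Fin q₂))
    (hU : ∀ x ∈ M, IsMDS d t (U x)) :
    IsMDS d t {z : Fin d → Fin q₁ × Fin q₂ |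
      (fun i => (z i).1) ∈ M ∧ (fun i => (z i).2) ∈ U (fun i => (z i).1)} := by
  intro S hS g
  obtain ⟨x, ⟨hxM, hxg⟩, hxuniq⟩ := hM S hS (fun i => (g i).1)
  obtain ⟨y, ⟨hyU, hyg⟩, hyuniq⟩ := hU x hxM S hS (fun i => (g i).2)
  refine ⟨fun i => (x i, y i), ⟨⟨hxM, hyU⟩, fun i hi => ?_⟩, ?_⟩
  · exact Prod.ext (hxg i hi) (hyg i hi)
  · rintro z ⟨⟨hz1, hz2⟩, hzg⟩
    have hx : (fun i => (z i).1) = x :=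
      hxuniq _ ⟨hz1, fun i hi => congrArg Prod.fst (hzg i hi)⟩
    have hy : (fun i => (z i).2) = y := by
      apply hyuniq
      constructor
      · rw [← hx]; exact hz2
      · exact fun i hi => congrArg Prod.snd (hzg i hi)
    funext i
    exact Prod.ext (congrFun hx i) (congrFun hy i)
end

section
/- Let F be a finite field with q elements, let 1 ≤ t ≤ d, and let A be a t×d matrix over F all of whose t×t minors are nonzero. Let V = F^m and let M = {Y : Y is a d×m matrix over F with AY = 0}, viewed as a code in V^d (rows of Y are the coordinates). Let W be an s-dimensional linear subspace of V and let u ∈ M. Then the set M_{u,W} = u + M|_W, where M|_W = {Y ∈ M : every row of Y lies in W}, is an MDS code in the subcube (u_1+W)×⋯×(u_d+W) with code distance t+1: it has cardinality (q^s)^{d−t}, and for every set S of d−t coordinates and every choice of vectors g_i ∈ u_i + W for i ∈ S there is exactly one element of M_{u,W} agreeing with these values on S. In particular M_{u,W} is an MDS subcode of M. -/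
lemma sum_smul_mul_helper {t m : ℕ} {F : Type*} [Field F]
    (B C : Matrix (Fin t) (Fin t) F) (Y : Fin t → Fin m → F) (k : Fin t) :
    ∑ r, B k r • (∑ j, C r j • Y j) = ∑ j, (B * C) k j • Y j := by
  simp only [Finset.smul_sum, smul_smul, Matrix.mul_apply, Finset.sum_smul]
  exact Finset.sum_comm

lemma core_solve {t d m : ℕ} {F : Type*} [Field F] [DecidableEq F] (htd : t ≤ d)
    (A : Matrix (Fin t) (Fin d) F)
    (hminor : ∀ c : Fin t → Fin d, Function.Injective c → (A.submatrix id c).det ≠ 0)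
    (W : Submodule F (Fin m → F))
    (S : Finset (Fin d)) (hS : S.card = d - t)
    (g : Fin d → Fin m → F) (hg : ∀ i ∈ S, g i ∈ W) :
    ∃! Z : Fin d → Fin m → F,
      (∀ r, ∑ i, A r i • Z i = 0) ∧ (∀ i, Z i ∈ W) ∧ ∀ i ∈ S, Z i = g i := by
  classical
  have hSc : Sᶜ.card = t := by
    simp [Finset.card_compl, hS]
    omega
  set e : Fin t ≃ {x // x ∈ Sᶜ} := (Sᶜ.equivFinOfCardEq hSc).symm with he
  set c : Fin t → Fin d := fun k => (e k : Fin d) with hcdef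
  have hc : Function.Injective c := fun a b h => e.injective (Subtype.ext h)
  have hcS : ∀ k, c k ∉ S := fun k => Finset.mem_compl.mp (e k).2
  set B : Matrix (Fin t) (Fin t) F := A.submatrix id c with hBdef
  have hB : B.det ≠ 0 := hminor c hc
  have hBunit : IsUnit B.det := isUnit_iff_ne_zero.mpr hB
  have hBBi : B * B⁻¹ = 1 := Matrix.mul_nonsing_inv B hBunit
  have hBiB : B⁻¹ * B = 1 := Matrix.nonsing_inv_mul B hBunit
  set C : Fin t → Fin m → F := fun r => -∑ i ∈ S, A r i • g i with hCdef
  have hCW : ∀ r, C r ∈ W := fun r =>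
    W.neg_mem (W.sum_mem fun i hi => W.smul_mem _ (hg i hi))
  set Y : Fin t → Fin m → F := fun k => ∑ r, B⁻¹ k r • C r with hYdef
  have hYW : ∀ k, Y k ∈ W := fun k => W.sum_mem fun r _ => W.smul_mem _ (hCW r)
  have hYeq : ∀ r, ∑ k, B r k • Y k = C r := by
    intro r
    rw [hYdef]
    rw [sum_smul_mul_helper B B⁻¹ C r, hBBi]
    simp [Matrix.one_apply]
  set Z : Fin d → Fin m → F :=
    fun i => if h : i ∈ S then g i else Y (e.symm ⟨i, Finset.mem_compl.mpr h⟩) with hZdef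
  have hZc : ∀ k, Z (c k) = Y k := by
    intro k
    have : (⟨c k, Finset.mem_compl.mpr (hcS k)⟩ : {x // x ∈ Sᶜ}) = e k := Subtype.ext rfl
    simp only [hZdef, dif_neg (hcS k), this, Equiv.symm_apply_apply]
  have hsplit : ∀ (Z' : Fin d → Fin m → F) (r : Fin t),
      ∑ i, A r i • Z' i = (∑ i ∈ S, A r i • Z' i) + ∑ k, B r k • Z' (c k) := by
    intro Z' r
    rw [← Finset.sum_add_sum_compl S fun i => A r i • Z' i]
    congr 1
    calc ∑ i ∈ Sᶜ, A r i • Z' i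
        = ∑ i : {x // x ∈ Sᶜ}, A r (i : Fin d) • Z' (i : Fin d) :=
          (Finset.sum_coe_sort Sᶜ (fun x => A r x • Z' x)).symm
      _ = ∑ k, A r (c k) • Z' (c k) :=
          (Equiv.sum_comp e (fun x : {x // x ∈ Sᶜ} => A r (x : Fin d) • Z' (x : Fin d))).symm
      _ = ∑ k, B r k • Z' (c k) := rfl
  have hZ0 : ∀ r, ∑ i, A r i • Z i = 0 := by
    intro r
    rw [hsplit Z r]
    have h1 : ∑ i ∈ S, A r i • Z i = -C r := by
      rw [hCdef, neg_neg]
      exact Finset.sum_congr rfl fun i hi => by rw [hZdef]; simp [dif_pos hi]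
    have h2 : ∑ k, B r k • Z (c k) = C r := by
      rw [Finset.sum_congr rfl fun k _ => by rw [hZc k]]
      exact hYeq r
    rw [h1, h2, neg_add_cancel]
  refine ⟨Z, ⟨hZ0, ?_, ?_⟩, ?_⟩
  · intro i
    by_cases h : i ∈ S
    · simpa [hZdef, dif_pos h] using hg i h
    · simpa [hZdef, dif_neg h] using hYW _
  · intro i hi; simp [hZdef, dif_pos hi]
  · rintro Z' ⟨h1, h2, h3⟩
    set D : Fin t → Fin m → F := fun k => Z' (c k) - Z (c k) with hDdef
    have hD : ∀ r, ∑ k, B r k • D k = 0 := by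
      intro r
      have e1 : ∑ i ∈ S, A r i • Z' i = ∑ i ∈ S, A r i • Z i := by
        refine Finset.sum_congr rfl fun i hi => ?_
        rw [h3 i hi, hZdef]; simp [dif_pos hi]
      have t1 := hsplit Z' r
      have t2 := hsplit Z r
      rw [h1 r] at t1
      rw [hZ0 r] at t2
      have q1 : ∑ k, B r k • Z' (c k) = -∑ i ∈ S, A r i • Z' i :=
        eq_neg_of_add_eq_zero_right t1.symm
      have q2 : ∑ k, B r k • Z (c k) = -∑ i ∈ S, A r i • Z i :=
        eq_neg_of_add_eq_zero_right t2.symm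
      simp only [hDdef, smul_sub, Finset.sum_sub_distrib]
      rw [q1, q2, e1, sub_self]
    have hDzero : ∀ k, D k = 0 := by
      intro k
      have := sum_smul_mul_helper B⁻¹ B D k
      rw [hBiB] at this
      simp only [Matrix.one_apply] at this
      have hrhs : ∑ j, (if k = j then (1:F) else 0) • D j = D k := by
        simp [Finset.sum_ite_eq]
      rw [hrhs] at this
      rw [← this]
      simp [hD]
    funext i
    by_cases h : i ∈ S
    · rw [h3 i h, hZdef]
      simp [dif_pos h]
    · have hmem : i ∈ Sᶜ := Finset.mem_compl.mpr h
      have hci : c (e.symm ⟨i, hmem⟩) = i := by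
        simp [hcdef]
      have := hDzero (e.symm ⟨i, hmem⟩)
      rw [hDdef] at this
      simp only at this
      rw [hci] at this
      exact sub_eq_zero.mp this

/-- Let `A` be a `t × d` check matrix over `F = GF(q)` all of whose `t × t`
minors are nonzero, and let `M = {Y ∈ V^d : AY = 0}` with `V = F^m` (elements
of `V^d` are `d × m` matrices whose rows are the coordinates).  For an
`s`-dimensional subspace `W ⊆ V` and `u ∈ M`, the set `M_{u,W} = u + M|_W` is
an MDS code with code distance `t+1` in the subcube `(u_1+W) × ⋯ × (u_d+W)`:
it has cardinality `(q^s)^(d-t)`, and moreover `M_{u,W} = M ∩ ((u_1+W) × ⋯ × (u_d+W))`,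
i.e. `M_{u,W}` is an MDS subcode of `M`. -/
theorem affine_subcode_MDS (q t d m s : ℕ) (F : Type*) [Field F] [Fintype F]
    [DecidableEq F] (hq : Fintype.card F = q) (ht : 1 ≤ t) (htd : t ≤ d)
    (A : Matrix (Fin t) (Fin d) F)
    (hminor : ∀ c : Fin t → Fin d, Function.Injective c →
      (A.submatrix id c).det ≠ 0)
    (M : Set (Fin d → (Fin m → F)))
    (hM : M = {Y | ∀ r : Fin t, ∑ i, A r i • Y i = 0})
    (W : Submodule F (Fin m → F)) (hW : Module.finrank F W = s)
    (u : Fin d → (Fin m → F)) (hu : u ∈ M)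
    (T : Set (Fin d → (Fin m → F)))
    (hT : T = {Y | ∃ Z ∈ M, (∀ i, Z i ∈ W) ∧ Y = u + Z}) :
    T.ncard = (q ^ s) ^ (d - t) ∧
      IsMDSIn d t (fun i => {v | v - u i ∈ W}) T ∧
      T = M ∩ {Y | ∀ i, Y i - u i ∈ W} := by
  classical
  subst hM hT
  simp only [Set.mem_setOf_eq] at hu
  -- Part 3
  have h3 : {Y | ∃ Z ∈ {Y | ∀ r : Fin t, ∑ i, A r i • Y i = 0}, (∀ i, Z i ∈ W) ∧ Y = u + Z}
      = {Y | ∀ r : Fin t, ∑ i, A r i • Y i = 0} ∩ {Y | ∀ i, Y i - u i ∈ W} := by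
    ext Y
    simp only [Set.mem_setOf_eq, Set.mem_inter_iff]
    constructor
    · rintro ⟨Z, hZM, hZW, rfl⟩
      refine ⟨fun r => ?_, fun i => ?_⟩
      · simp only [Pi.add_apply, smul_add, Finset.sum_add_distrib, hu r, hZM r, add_zero]
      · simpa [Pi.add_apply, add_sub_cancel_left] using hZW i
    · rintro ⟨hYM, hYW⟩
      refine ⟨Y - u, fun r => ?_, fun i => by simpa using hYW i, by abel⟩
      simp only [Pi.sub_apply, smul_sub, Finset.sum_sub_distrib, hYM r, hu r, sub_zero]
  -- Part 2
  have h2 : IsMDSIn d t (fun i => {v | v - u i ∈ W})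
      {Y | ∃ Z ∈ {Y | ∀ r : Fin t, ∑ i, A r i • Y i = 0}, (∀ i, Z i ∈ W) ∧ Y = u + Z} := by
    constructor
    · intro x hx i
      rw [h3] at hx
      exact hx.2 i
    · intro S hS g hg
      obtain ⟨Z, ⟨hZ1, hZ2, hZ3⟩, hZu⟩ := core_solve htd A hminor W S hS
        (fun i => g i - u i) hg
      refine ⟨u + Z, ⟨⟨Z, hZ1, hZ2, rfl⟩, fun i hi => by
        simp [Pi.add_apply, hZ3 i hi]⟩, ?_⟩
      rintro x ⟨⟨Z', hZ'1, hZ'2, rfl⟩, hxg⟩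
      have : Z' = Z := by
        refine hZu Z' ⟨hZ'1, hZ'2, fun i hi => ?_⟩
        have := hxg i hi
        simp only [Pi.add_apply] at this
        simp [← this]
      rw [this]
  refine ⟨?_, h2, h3⟩
  -- Part 1 : cardinality
  obtain ⟨S₀, -, hS₀⟩ := Finset.exists_subset_card_eq
    (s := (Finset.univ : Finset (Fin d))) (n := d - t) (by simp)
  set T : Set (Fin d → Fin m → F) :=
    {Y | ∃ Z ∈ {Y | ∀ r : Fin t, ∑ i, A r i • Y i = 0}, (∀ i, Z i ∈ W) ∧ Y = u + Z} with hTdef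
  have hfinW : Fintype ↥W := Fintype.ofFinite _
  have hcardW : Nat.card ↥W = q ^ s := by
    rw [Nat.card_eq_fintype_card, Module.card_eq_pow_finrank (K := F) (V := ↥W), hW, hq]
  have hmemW : ∀ x ∈ T, ∀ i, x i - u i ∈ W := fun x hx i => h2.1 x hx i
  set f : ↥T → (↥S₀ → ↥W) := fun x i => ⟨x.1 (i : Fin d) - u i, hmemW x.1 x.2 i⟩ with hfdef
  have hbij : Function.Bijective f := by
    constructor
    · rintro ⟨x, hx⟩ ⟨y, hy⟩ hxy
      have hagree : ∀ i ∈ S₀, y i = x i := by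
        intro i hi
        have := congrFun hxy ⟨i, hi⟩
        have h' := congrArg Subtype.val this
        simp only [hfdef] at h'
        have : x i - u i = y i - u i := h'
        have := sub_left_injective this
        exact this.symm
      obtain ⟨z, hz, huniq⟩ := h2.2 S₀ hS₀ x (fun i _ => hmemW x hx i)
      have e1 : x = z := huniq x ⟨hx, fun i _ => rfl⟩
      have e2 : y = z := huniq y ⟨hy, hagree⟩
      exact Subtype.ext (e1.trans e2.symm)
    · intro h
      set g : Fin d → Fin m → F :=
        fun i => if hi : i ∈ S₀ then u i + (h ⟨i, hi⟩ : Fin m → F) else u i with hgdef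
      have hg : ∀ i ∈ S₀, g i ∈ {v | v - u i ∈ W} := by
        intro i hi
        simp only [hgdef, dif_pos hi, Set.mem_setOf_eq, add_sub_cancel_left]
        exact (h ⟨i, hi⟩).2
      obtain ⟨x, ⟨hxT, hxg⟩, -⟩ := h2.2 S₀ hS₀ g hg
      refine ⟨⟨x, hxT⟩, ?_⟩
      funext i
      apply Subtype.ext
      simp only [hfdef]
      rw [hxg i i.2, hgdef]
      simp [dif_pos i.2]
  have : Nat.card ↥T = Nat.card (↥S₀ → ↥W) := Nat.card_eq_of_bijective f hbij
  rw [← Nat.card_coe_set_eq, this, Nat.card_fun, hcardW, Nat.card_eq_finsetCard, hS₀]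
end

section
/- Let C ⊆ Q_q^d (d ≥ 2) be a code in which any two distinct codewords have Hamming distance at least 2. Suppose that for each a ∈ Q_q the embedded retract C^d_a = {x ∈ C : x_d = a} is a subset of some MDS(1,d,q) code M_a ⊆ Q_q^d. Then there exists an MDS(1,d,q^2) code M over the alphabet Q_q × Q_q (identified with Q_{q^2}) such that the image of C under the coordinatewise map x_i ↦ (0,x_i) for i < d and x_d ↦ (x_d,x_d) (as in the generalized Cartesian product construction) is contained in M; in particular C embeds into an MDS(1,d,q^2) code. -/
open Finset Function

section ExistsUnique

variable {ι α β : Type*}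

theorem existsUnique_prod_iff_of_fst_eq (φ : β → α) (Q : α → β → Prop) :
    (∃! p : α × β, p.1 = φ p.2 ∧ Q p.1 p.2) ↔ ∃! b, Q (φ b) b := by
  constructor
  · rintro ⟨⟨a, b⟩, ⟨ha : a = φ b, hb⟩, huniq⟩
    subst ha
    exact ⟨b, hb, fun b' hb' => congrArg Prod.snd (huniq (φ b', b') ⟨rfl, hb'⟩)⟩
  · rintro ⟨b, hb, huniq⟩
    refine ⟨(φ b, b), ⟨rfl, hb⟩, ?_⟩
    rintro ⟨a', b'⟩ ⟨ha' : a' = φ b', hb'⟩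
    subst ha'
    rw [huniq b' hb']

theorem existsUnique_eq_off_iff [DecidableEq ι] (P : (ι → α) → Prop) (g : ι → α) (j : ι) :
    (∃! x, P x ∧ ∀ i ≠ j, x i = g i) ↔ ∃! b, P (update g j b) := by
  constructor
  · rintro ⟨x, ⟨hx, hxg⟩, huniq⟩
    have hx_eq : x = update g j (x j) := eq_update_iff.2 ⟨rfl, hxg⟩
    refine ⟨x j, (hx_eq ▸ hx : P (update g j (x j))), fun b hb => ?_⟩
    have := huniq (update g j b) ⟨hb, fun i hi => update_of_ne hi _ _⟩
    simpa using congrFun this j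
  · rintro ⟨b, hb, huniq⟩
    refine ⟨update g j b, ⟨hb, fun i hi => update_of_ne hi _ _⟩, fun x ⟨hx, hxg⟩ => ?_⟩
    have hx_eq : x = update g j (x j) := eq_update_iff.2 ⟨rfl, hxg⟩
    rw [hx_eq, huniq (x j) ((hx_eq ▸ hx : P (update g j (x j))))]

end ExistsUnique

theorem isMDS_one_iff {α : Type*} {n : ℕ} {D : Set (Fin (n + 1) → α)} :
    IsMDS (n + 1) 1 D ↔ ∀ j (g : Fin (n + 1) → α), ∃! b, update g j b ∈ D := by
  constructor
  · intro hD j g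
    have := hD {j}ᶜ (by simp [card_compl]) g
    simp only [mem_compl, mem_singleton] at this
    exact (existsUnique_eq_off_iff (· ∈ D) g j).1 this
  · intro hD S hS g
    obtain ⟨j, hj⟩ : ∃ j, Sᶜ = {j} := card_eq_one.1 (by simp [card_compl, hS])
    rw [← compl_compl S, hj]
    simpa only [mem_compl, mem_singleton] using (existsUnique_eq_off_iff (· ∈ D) g j).2 (hD j g)

section Hamming

variable {ι α : Type*} [Fintype ι] [DecidableEq ι] [DecidableEq α]

theorem hammingDist_update_le_one (x : ι → α) (l : ι) (b : α) :
    hammingDist x (update x l b) ≤ 1 := by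
  refine (card_le_card fun i hi => ?_).trans (card_singleton l).le
  by_contra hil
  simp_all [update_of_ne]

theorem injOn_update_of_two_le_hammingDist {C : Set (ι → α)}
    (hC : ∀ x ∈ C, ∀ y ∈ C, x ≠ y → 2 ≤ hammingDist x y) (l : ι) (b : α) :
    Set.InjOn (fun x => update x l b) C := by
  intro x hx y hy hxy
  by_contra hne
  have hy_eq : y = update x l (y l) := eq_update_iff.2 ⟨rfl, fun i hi => by
    simpa [update_of_ne hi] using congrFun hxy.symm i⟩
  have hfar := hC x hx y hy hne
  have hnear : hammingDist x y ≤ 1 := by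
    rw [hy_eq]
    exact hammingDist_update_le_one x l (y l)
  omega

theorem exists_eq_apply_of_two_le_hammingDist [Nonempty α] {C : Set (ι → α)}
    (hC : ∀ x ∈ C, ∀ y ∈ C, x ≠ y → 2 ≤ hammingDist x y) (l : ι) :
    ∃ f : (ι → α) → α, (∀ v b, f (update v l b) = f v) ∧ ∀ x ∈ C, f x = x l := by
  obtain ⟨b₀⟩ := ‹Nonempty α›
  have hinj := Set.injOn_iff_injective.1 (injOn_update_of_two_le_hammingDist hC l b₀)
  refine ⟨fun v => extend (C.domRestrict fun x => update x l b₀) (C.domRestrict fun x => x l)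
    (fun _ => b₀) (update v l b₀), fun v b => by simp only [update_idem],
    fun x hx => hinj.extend_apply _ _ ⟨x, hx⟩⟩

end Hamming

section LabelledCode

variable {ι G β : Type*} [Fintype ι] [DecidableEq ι] [AddCommGroup G]

def labelledCode (M : G → Set (ι → β)) (f : (ι → β) → G) (l : ι) : Set (ι → G × β) :=
  {y | (y l).1 = ∑ i ∈ univ.erase l, (y i).1 + f (Prod.snd ∘ y) ∧ Prod.snd ∘ y ∈ M (y l).1}

theorem existsUnique_update_mem_labelledCode {M : G → Set (ι → β)} {f : (ι → β) → G} {l : ι}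
    (hM : ∀ a j (v : ι → β), ∃! b, update v j b ∈ M a) (hf : ∀ v b, f (update v l b) = f v)
    (j : ι) (y : ι → G × β) : ∃! p, update y j p ∈ labelledCode M f l := by
  simp only [labelledCode, Set.mem_ofPred_eq, comp_update]
  by_cases hjl : j = l
  · subst hjl
    have hsum : ∀ p, ∑ i ∈ univ.erase j, (update y j p i).1 = ∑ i ∈ univ.erase j, (y i).1 :=
      fun p => sum_congr rfl fun i hi => by rw [update_of_ne (ne_of_mem_erase hi)]
    simp only [update_self, hsum, hf]
    exact (existsUnique_prod_iff_of_fst_eq _ fun a b => update (Prod.snd ∘ y) j b ∈ M a).2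
      (hM _ j _)
  · have hsum : ∀ p, ∑ i ∈ univ.erase l, (update y j p i).1 =
        p.1 + ∑ i ∈ (univ.erase l).erase j, (y i).1 := fun p => by
      rw [← add_sum_erase _ _ (mem_erase.2 ⟨hjl, mem_univ j⟩), update_self]
      congr 1
      exact sum_congr rfl fun i hi => by rw [update_of_ne (ne_of_mem_erase hi)]
    simp only [update_of_ne (Ne.symm hjl), hsum, add_assoc, eq_comm (a := (y l).1),
      ← eq_sub_iff_add_eq]
    exact (existsUnique_prod_iff_of_fst_eq
      (fun b => (y l).1 - (∑ i ∈ (univ.erase l).erase j, (y i).1 + f (update (Prod.snd ∘ y) j b)))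
      fun _ b => update (Prod.snd ∘ y) j b ∈ M (y l).1).2 (hM _ j _)

end LabelledCode

theorem embed_retracts_general (n q : ℕ) (hq : 0 < q)
    (C : Set (Fin (n + 1) → Fin q))
    (hC : ∀ x ∈ C, ∀ y ∈ C, x ≠ y → 2 ≤ hammingDist x y)
    (M : Fin q → Set (Fin (n + 1) → Fin q))
    (hM : ∀ a : Fin q, IsMDS (n + 1) 1 (M a))
    (hret : ∀ a : Fin q, {x ∈ C | x (Fin.last n) = a} ⊆ M a) :
    ∃ N : Set (Fin (n + 1) → Fin q × Fin q),
      IsMDS (n + 1) 1 N ∧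
        (fun x : Fin (n + 1) → Fin q => fun i : Fin (n + 1) =>
          if i = Fin.last n then (x i, x i) else ((⟨0, hq⟩ : Fin q), x i)) '' C ⊆ N := by
  have : NeZero q := ⟨hq.ne'⟩
  obtain ⟨f, hf, hfC⟩ := exists_eq_apply_of_two_le_hammingDist hC (Fin.last n)
  refine ⟨labelledCode M f (Fin.last n), isMDS_one_iff.2
    (existsUnique_update_mem_labelledCode (fun a => isMDS_one_iff.1 (hM a)) hf), ?_⟩
  rintro _ ⟨x, hx, rfl⟩
  have hsnd : (Prod.snd ∘ fun i =>
      if i = Fin.last n then (x i, x i) else ((⟨0, hq⟩ : Fin q), x i)) = x := by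
    funext i
    simp only [comp_apply]
    split <;> rfl
  have hsum : ∑ i ∈ univ.erase (Fin.last n),
      (if i = Fin.last n then (x i, x i) else ((⟨0, hq⟩ : Fin q), x i)).1 = 0 :=
    sum_eq_zero fun i hi => by rw [if_neg (ne_of_mem_erase hi)]; rfl
  simpa only [labelledCode, Set.mem_ofPred_eq, hsnd, hsum, if_pos, hfC x hx, zero_add, true_and]
    using hret _ ⟨hx, rfl⟩

/-- Lemma: let `C ⊆ Q_q^d` (here `d = n + 1 ≥ 2`) have code distance `2`, and
suppose that for each `a ∈ Q_q` the embedded retract `C^d_a = {x ∈ C : x_d = a}`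
is contained in some MDS(1,d,q) code `M a`.  Then there is an MDS(1,d,q²) code
`N` over the alphabet `Q_q × Q_q ≅ Q_{q²}` containing the image of `C` under
the coordinatewise embedding `x_i ↦ (0, x_i)` for `i < d`, `x_d ↦ (x_d, x_d)`. -/
theorem embed_retracts (n q : ℕ) (hn : 1 ≤ n) (hq : 0 < q)
    (C : Set (Fin (n + 1) → Fin q))
    (hC : ∀ x ∈ C, ∀ y ∈ C, x ≠ y → 2 ≤ hammingDist x y)
    (M : Fin q → Set (Fin (n + 1) → Fin q))
    (hM : ∀ a : Fin q, IsMDS (n + 1) 1 (M a))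
    (hret : ∀ a : Fin q, {x ∈ C | x (Fin.last n) = a} ⊆ M a) :
    ∃ N : Set (Fin (n + 1) → Fin q × Fin q),
      IsMDS (n + 1) 1 N ∧
        (fun x : Fin (n + 1) → Fin q => fun i : Fin (n + 1) =>
          if i = Fin.last n then (x i, x i) else ((⟨0, hq⟩ : Fin q), x i)) '' C ⊆ N :=
  embed_retracts_general n q hq C hC M hM hret
end

section
/- Let C ⊆ Q_q^d (d ≥ 2) be a code in which any two distinct codewords have Hamming distance at least 2. Then there exist an integer q' with q ≤ q' ≤ q^{d−1} and an MDS(1,d,q') code M ⊆ Q_{q'}^d such that the image of C under the coordinatewise inclusion Q_q ⊆ Q_{q'} (after a suitable distance-preserving embedding of the alphabet) is contained in M. Equivalently, every partial (d−1)-dimensional Latin hypercube of order q can be embedded into a (d−1)-dimensional Latin hypercube of order at most q^{d−1}. -/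
lemma exists_perm_extend {α : Type*} [Fintype α] [DecidableEq α] (f : α → α) (s : Set α)
    (hf : Set.InjOn f s) : ∃ σ : Equiv.Perm α, ∀ x ∈ s, σ x = f x := by
  classical
  refine ⟨(Equiv.Set.imageOfInjOn f s hf).extendSubtype, fun x hx => ?_⟩
  rw [Equiv.extendSubtype_apply_of_mem _ x hx]
  rfl

lemma isMDS_map_equiv {α β : Type*} (e : α ≃ β) {d t : ℕ} {M : Set (Fin d → α)}
    (h : IsMDS d t M) : IsMDS d t ((fun x => fun i => e (x i)) '' M) := by
  intro S hS g
  obtain ⟨x, ⟨hxM, hxg⟩, hx!⟩ := h S hS (fun i => e.symm (g i))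
  refine ⟨fun i => e (x i), ⟨⟨x, hxM, rfl⟩, fun i hi => by show e (x i) = g i; rw [hxg i hi]; simp⟩, ?_⟩
  rintro y ⟨⟨x', hx'M, rfl⟩, hyg⟩
  have hx' : x' = x := hx! x' ⟨hx'M, fun i hi => by
    have := hyg i hi
    simpa using congrArg e.symm this⟩
  rw [hx']

/-- Every code `C ⊆ Q_q^d`, `d ≥ 2`, with code distance `2` (a partial
`(d-1)`-dimensional Latin hypercube of order `q`) embeds, via a suitable
injection of alphabets `Q_q ↪ Q_{q'}` applied coordinatewise, into an
MDS(1,d,q') code (a `(d-1)`-dimensional Latin hypercube) with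
`q ≤ q' ≤ q^(d-1)`. -/
theorem embed_in_latin_hypercube (d q : ℕ) (hd : 2 ≤ d)
    (C : Set (Fin d → Fin q))
    (hC : ∀ x ∈ C, ∀ y ∈ C, x ≠ y → 2 ≤ hammingDist x y) :
    ∃ q' : ℕ, q ≤ q' ∧ q' ≤ q ^ (d - 1) ∧
      ∃ (f : Fin q ↪ Fin q') (M : Set (Fin d → Fin q')),
        IsMDS d 1 M ∧ (fun x : Fin d → Fin q => fun i => f (x i)) '' C ⊆ M := by
  classical
  rcases Nat.eq_zero_or_pos q with hq | hq
  · subst hq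
    refine ⟨0, le_rfl, Nat.zero_le _, Function.Embedding.refl _, ∅, ?_, ?_⟩
    · intro S hS g
      exact (g ⟨0, by omega⟩).elim0
    · rintro y ⟨x, hx, rfl⟩
      exact (x ⟨0, by omega⟩).elim0
  obtain ⟨m, rfl⟩ : ∃ m, q = m + 1 := ⟨q - 1, by omega⟩
  obtain ⟨n, rfl⟩ : ∃ n, d = n + 1 := ⟨d - 1, by omega⟩
  have hn : 1 ≤ n := by omega
  -- uniqueness of codewords agreeing off one coordinate
  have hu : ∀ x ∈ C, ∀ y ∈ C, ∀ i0 : Fin (n+1), (∀ i, i ≠ i0 → x i = y i) → x = y := by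
    intro x hx y hy i0 hagree
    by_contra hne
    have h2 := hC x hx y hy hne
    have h1 : hammingDist x y ≤ 1 := by
      have hsub : (Finset.univ.filter fun i => x i ≠ y i) ⊆ {i0} := by
        intro i hi
        simp only [Finset.mem_filter] at hi
        simp only [Finset.mem_singleton]
        by_contra h
        exact hi.2 (hagree i h)
      calc hammingDist x y = (Finset.univ.filter fun i => x i ≠ y i).card := rfl
        _ ≤ ({i0} : Finset _).card := Finset.card_le_card hsub
        _ = 1 := Finset.card_singleton i0
    omega
  -- the partial (n)-ary operation
  obtain ⟨p, hp⟩ : ∃ p : (Fin n → Fin (m+1)) → Fin (m+1),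
      ∀ (t : Fin n → Fin (m+1)) (x : Fin (n+1) → Fin (m+1)), x ∈ C → (∀ j : Fin n, x j.castSucc = t j) →
        p t = x (Fin.last n) := by
    refine ⟨fun t => if h : ∃ x, x ∈ C ∧ ∀ j : Fin n, x j.castSucc = t j
        then h.choose (Fin.last n) else 0, ?_⟩
    intro t x hxC hxt
    have h : ∃ x, x ∈ C ∧ ∀ j : Fin n, x j.castSucc = t j := ⟨x, hxC, hxt⟩
    have hy := h.choose_spec
    have hxy : h.choose = x :=
      hu _ hy.1 _ hxC (Fin.last n) (fun i hi => by
        obtain ⟨j, rfl⟩ := Fin.exists_castSucc_eq.2 hi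
        rw [hy.2 j, hxt j])
    simp only [dif_pos h, hxy]
  -- the family of permutations
  obtain ⟨σ, hσ⟩ : ∃ σ : Fin n → (Fin n → Fin (m+1)) → Equiv.Perm (Fin (m+1)),
      ∀ (k : Fin n) (t : Fin n → Fin (m+1)) (s : Fin (m+1)) (x : Fin (n+1) → Fin (m+1)), x ∈ C →
        (∀ j : Fin n, x j.castSucc = Function.update t k s j) →
        σ k t s = x (Fin.last n) - ∑ j ∈ Finset.univ.erase k, t j := by
    have key : ∀ (k : Fin n) (t : Fin n → Fin (m+1)), ∃ τ : Equiv.Perm (Fin (m+1)),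
        ∀ (s : Fin (m+1)) (x : Fin (n+1) → Fin (m+1)), x ∈ C →
          (∀ j : Fin n, x j.castSucc = Function.update t k s j) →
          τ s = x (Fin.last n) - ∑ j ∈ Finset.univ.erase k, t j := by
      intro k t
      have hinj : Set.InjOn
          (fun s => p (Function.update t k s) - ∑ j ∈ Finset.univ.erase k, t j)
          {s | ∃ x, x ∈ C ∧ ∀ j : Fin n, x j.castSucc = Function.update t k s j} := by
        rintro s1 ⟨x1, hx1, ht1⟩ s2 ⟨x2, hx2, ht2⟩ he
        have he' : p (Function.update t k s1) - ∑ j ∈ Finset.univ.erase k, t j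
            = p (Function.update t k s2) - ∑ j ∈ Finset.univ.erase k, t j := he
        rw [hp _ x1 hx1 ht1, hp _ x2 hx2 ht2] at he'
        have hlast : x1 (Fin.last n) = x2 (Fin.last n) := sub_left_inj.mp he'
        have hx12 : x1 = x2 := hu _ hx1 _ hx2 k.castSucc (fun i hi => by
          by_cases hilast : i = Fin.last n
          · rw [hilast]; exact hlast
          · obtain ⟨j, rfl⟩ := Fin.exists_castSucc_eq.2 hilast
            have hj : j ≠ k := fun h => hi (by rw [h])
            rw [ht1 j, ht2 j, Function.update_of_ne hj, Function.update_of_ne hj])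
        have e1 : x1 k.castSucc = s1 := by rw [ht1 k, Function.update_self]
        have e2 : x1 k.castSucc = s2 := by rw [hx12, ht2 k, Function.update_self]
        rw [← e1, ← e2]
      obtain ⟨τ, hτ⟩ := exists_perm_extend _ _ hinj
      refine ⟨τ, fun s x hxC hxt => ?_⟩
      have h2 : τ s = p (Function.update t k s) - ∑ j ∈ Finset.univ.erase k, t j :=
        hτ s ⟨x, hxC, hxt⟩
      rw [h2, hp _ x hxC hxt]
    exact ⟨fun k t => (key k t).choose, fun k t => (key k t).choose_spec⟩
  -- the full n-ary quasigroup operation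
  obtain ⟨F, hFinj, hFC⟩ : ∃ F : (Fin n → (Fin n → Fin (m+1))) → (Fin n → Fin (m+1)),
      (∀ (k : Fin n) (u : Fin n → (Fin n → Fin (m+1))) (w w' : Fin n → Fin (m+1)),
        F (Function.update u k w) = F (Function.update u k w') → w = w') ∧
      (∀ x ∈ C, F (fun j _ => x j.castSucc) = fun _ => x (Fin.last n)) := by
    set G : (Fin n → Fin (m+1)) → (Fin n → Fin (m+1)) :=
      fun t kk => σ kk (Function.update t kk 0) (t kk) - t kk with hG
    refine ⟨fun u => (∑ j, u j) + G (fun j => u j j), ?_, ?_⟩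
    · intro k u w w' h
      simp only at h
      set T : Fin n → Fin (m+1) := fun j => u j j with hT
      have hTw : ∀ w : Fin n → Fin (m+1),
          (fun j => Function.update u k w j j) = Function.update T k (w k) := by
        intro w; funext j
        by_cases hj : j = k
        · subst hj; simp
        · rw [Function.update_of_ne hj, Function.update_of_ne hj]
      have hsum : ∀ w : Fin n → Fin (m+1),
          ∑ j, Function.update u k w j = w + ∑ j ∈ Finset.univ \ {k}, u j :=
        fun w => Finset.sum_update_of_mem (Finset.mem_univ k) u w
      rw [hTw w, hTw w', hsum w, hsum w'] at h
      have hk : w k = w' k := by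
        have h1 := congrFun h k
        simp only [Pi.add_apply, hG, Function.update_idem, Function.update_self] at h1
        have habel : ∀ a b s : Fin (m+1), a + b + (s - a) = b + s := by intros; abel
        rw [habel, habel] at h1
        exact (σ k (Function.update T k 0)).injective (add_left_cancel h1)
      rw [show Function.update T k (w k) = Function.update T k (w' k) by rw [hk]] at h
      exact add_right_cancel (add_right_cancel h)
    · intro x hx
      funext kk
      simp only [Pi.add_apply, hG]
      have hcond : ∀ j : Fin n, x j.castSucc =
          Function.update (Function.update (fun j : Fin n => x j.castSucc) kk 0) kk
            ((fun j : Fin n => x j.castSucc) kk) j := by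
        intro j
        rw [Function.update_idem, Function.update_eq_self]
      rw [hσ kk _ _ x hx hcond]
      have hsum2 : ∑ j ∈ Finset.univ.erase kk,
          Function.update (fun j : Fin n => x j.castSucc) kk 0 j
          = ∑ j ∈ Finset.univ.erase kk, x j.castSucc :=
        Finset.sum_congr rfl (fun j hj =>
          Function.update_of_ne (Finset.mem_erase.mp hj).1 _ _)
      rw [hsum2]
      have happ : (∑ j, (fun (j : Fin n) (_ : Fin n) => x j.castSucc) j) kk
          = ∑ j : Fin n, x j.castSucc := by
        rw [Finset.sum_apply]
      rw [happ, ← Finset.add_sum_erase _ _ (Finset.mem_univ kk)]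
      abel
  -- assemble
  have hd1 : (n + 1) - 1 = n := by omega
  refine ⟨(m+1)^n, Nat.le_self_pow (by omega) _, by rw [hd1], ?_⟩
  set E : (Fin n → Fin (m+1)) ≃ Fin ((m+1)^n) := finFunctionFinEquiv with hE
  refine ⟨⟨fun a => E (fun _ => a), ?_⟩, ?_⟩
  · intro a b hab
    have := E.injective hab
    exact congrFun this ⟨0, by omega⟩
  set M0 : Set (Fin (n+1) → (Fin n → Fin (m+1))) :=
    {x | x (Fin.last n) = F (fun j => x j.castSucc)} with hM0def
  have hM0 : IsMDS (n+1) 1 M0 := by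
    intro S hS g
    have hcompl : Sᶜ.card = 1 := by
      rw [Finset.card_compl, hS, Fintype.card_fin]; omega
    obtain ⟨i0, hi0⟩ := Finset.card_eq_one.mp hcompl
    have hmem : ∀ i, i ∈ S ↔ i ≠ i0 := by
      intro i
      rw [← Finset.notMem_singleton, ← hi0, Finset.mem_compl, not_not]
    by_cases hlast : i0 = Fin.last n
    · subst hlast
      have harg : ∀ y : Fin (n+1) → (Fin n → Fin (m+1)), (∀ i ∈ S, y i = g i) →
          (fun j : Fin n => y j.castSucc) = fun j => g j.castSucc := by
        intro y hy
        funext j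
        exact hy j.castSucc ((hmem _).2 (Fin.castSucc_lt_last j).ne)
      set x0 : Fin (n+1) → Fin n → Fin (m+1) :=
        Function.update g (Fin.last n) (F (fun j => g j.castSucc)) with hx0
      have hx0S : ∀ i ∈ S, x0 i = g i :=
        fun i hi => Function.update_of_ne ((hmem i).1 hi) _ _
      refine ⟨x0, ⟨?_, hx0S⟩, ?_⟩
      · show x0 (Fin.last n) = F (fun j => x0 j.castSucc)
        rw [harg x0 hx0S, hx0, Function.update_self]
      · rintro y ⟨hyM, hyg⟩
        funext i
        by_cases hi : i = Fin.last n
        · subst hi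
          rw [hyM, harg y hyg]
          show F (fun j => g j.castSucc) = x0 (Fin.last n)
          rw [hx0, Function.update_self]
        · rw [hyg i ((hmem i).2 hi)]
          exact (hx0S i ((hmem i).2 hi)).symm
    · obtain ⟨k, rfl⟩ := Fin.exists_castSucc_eq.2 hlast
      set u : Fin n → (Fin n → Fin (m+1)) := fun j => g j.castSucc with hudef
      have hbij : Function.Bijective (fun w => F (Function.update u k w)) :=
        Finite.injective_iff_bijective.mp (fun w w' h => hFinj k u w w' h)
      obtain ⟨w, hw0⟩ := hbij.2 (g (Fin.last n))
      have hw : F (Function.update u k w) = g (Fin.last n) := hw0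
      have harg : ∀ y : Fin (n+1) → (Fin n → Fin (m+1)), (∀ i ∈ S, y i = g i) →
          (fun j : Fin n => y j.castSucc) = Function.update u k (y k.castSucc) := by
        intro y hy
        funext j
        by_cases hj : j = k
        · subst hj; rw [Function.update_self]
        · rw [Function.update_of_ne hj]
          exact hy j.castSucc ((hmem _).2 (fun hh => hj (Fin.castSucc_injective _ hh)))
      set x1 : Fin (n+1) → Fin n → Fin (m+1) := Function.update g k.castSucc w with hx1
      have hx1S : ∀ i ∈ S, x1 i = g i :=
        fun i hi => Function.update_of_ne ((hmem i).1 hi) _ _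
      refine ⟨x1, ⟨?_, hx1S⟩, ?_⟩
      · show x1 (Fin.last n) = F (fun j => x1 j.castSucc)
        rw [harg x1 hx1S, hx1, Function.update_self, Function.update_of_ne (Fin.castSucc_lt_last k).ne', hw]
      · rintro y ⟨hyM, hyg⟩
        have h2 : F (Function.update u k (y k.castSucc)) = g (Fin.last n) := by
          rw [← harg y hyg, ← hyM]
          exact hyg (Fin.last n) ((hmem _).2 (Fin.castSucc_lt_last k).ne')
        have hyk : y k.castSucc = w := hFinj k u _ _ (h2.trans hw.symm)
        funext i
        by_cases hi : i = k.castSucc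
        · subst hi
          rw [hyk, hx1, Function.update_self]
        · rw [hyg i ((hmem i).2 hi)]
          exact (hx1S i ((hmem i).2 hi)).symm
  refine ⟨(fun x => fun i => E (x i)) '' M0, isMDS_map_equiv E hM0, ?_⟩
  rintro y ⟨x, hx, rfl⟩
  refine ⟨fun i _ => x i, ?_, rfl⟩
  show (fun _ => x (Fin.last n) : Fin n → Fin (m+1)) = F (fun j _ => x j.castSucc)
  exact (hFC x hx).symm
end
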